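/- Let N ≥ 0, let τ_0, …, τ_N be an injective enumeration of the N+1 roots of the right Radau polynomial R_{N+1}, let φ_0, …, φ_N be the Lagrange basis at these nodes, and w_p := ∫₀¹ φ_p(τ) dτ. Then for every p, w_p = ∫₀¹ φ_p(τ)² dτ (so the quadrature weights coincide with the diagonal entries of the mass matrix and each w_p > 0), and the weights are normalized: ∑_{p=0}^{N} w_p = 1. -/
import Mathlib


open Polynomial

/-- Shifted Legendre polynomial on `[0,1]` via the Rodrigues formula. -/
noncomputable def shLegendre (n : ℕ) : Polynomial ℝ :=
  (n.factorial : ℝ)⁻¹ • derivative^[n] ((X ^ 2 - X) ^ n)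

/-- Right Radau polynomial `R_N = ((-1)^N/2) (L_N - L_{N-1})`. -/
noncomputable def rightRadau (N : ℕ) : Polynomial ℝ :=
  ((-1 : ℝ) ^ N / 2) • (shLegendre N - shLegendre (N - 1))

open intervalIntegral MeasureTheory

noncomputable def polyInt (p : Polynomial ℝ) : ℝ := ∫ t in (0:ℝ)..1, p.eval t

lemma polyInt_intble (p : Polynomial ℝ) :
    IntervalIntegrable (fun t => p.eval t) volume 0 1 :=
  (p.continuous_aeval).intervalIntegrable _ _

lemma polyInt_add (p q : Polynomial ℝ) : polyInt (p + q) = polyInt p + polyInt q := by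
  unfold polyInt
  simp only [eval_add]
  exact integral_add (polyInt_intble p) (polyInt_intble q)

lemma polyInt_smul (c : ℝ) (p : Polynomial ℝ) : polyInt (c • p) = c * polyInt p := by
  unfold polyInt
  simp only [eval_smul, smul_eq_mul]
  exact integral_const_mul c _

lemma polyInt_sub (p q : Polynomial ℝ) : polyInt (p - q) = polyInt p - polyInt q := by
  have := polyInt_add q (p - q); simp at this; linarith

lemma polyInt_deriv (q : Polynomial ℝ) : polyInt (derivative q) = q.eval 1 - q.eval 0 := by
  refine integral_deriv_eq_sub' (fun x => q.eval x) ?_ (fun x _ => q.differentiableAt) ?_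
  · ext x; exact q.deriv
  · exact ((derivative q).continuous_aeval).continuousOn

lemma vanish_factor (n : ℕ) : ∀ j, j ≤ n → ∃ q : Polynomial ℝ,
    derivative^[j] ((X ^ 2 - X : Polynomial ℝ) ^ n) = (X ^ 2 - X) ^ (n - j) * q := by
  intro j
  induction j with
  | zero => intro _; exact ⟨1, by simp⟩
  | succ j ih =>
    intro hj
    obtain ⟨q, hq⟩ := ih (Nat.le_of_succ_le hj)
    obtain ⟨m, hm⟩ : ∃ m, n - j = m + 1 := ⟨n - j - 1, by omega⟩
    have hm' : n - (j + 1) = m := by omega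
    refine ⟨C ((n - j : ℕ) : ℝ) * derivative (X ^ 2 - X) * q + (X ^ 2 - X) * derivative q, ?_⟩
    rw [Function.iterate_succ_apply', hq, derivative_mul, derivative_pow, hm', hm]
    ring_nf
    rw [Nat.add_sub_cancel_left]

lemma vanish_eval (n j : ℕ) (hj : j < n) (x : ℝ) (hx : x ^ 2 - x = 0) :
    (derivative^[j] ((X ^ 2 - X : Polynomial ℝ) ^ n)).eval x = 0 := by
  obtain ⟨q, hq⟩ := vanish_factor n j hj.le
  have h1 : 1 ≤ n - j := by omega
  rw [hq, eval_mul, eval_pow]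
  simp [hx, zero_pow (by omega : n - j ≠ 0)]

lemma ibp (f g : Polynomial ℝ) (h0 : f.eval 0 = 0) (h1 : f.eval 1 = 0) :
    polyInt (derivative f * g) = - polyInt (f * derivative g) := by
  have := polyInt_deriv (f * g)
  rw [derivative_mul, polyInt_add] at this
  simp [eval_mul, h0, h1] at this
  linarith

lemma orth_aux (n : ℕ) : ∀ k, k ≤ n → ∀ s : Polynomial ℝ,
    polyInt (derivative^[n] ((X ^ 2 - X : Polynomial ℝ) ^ n) * s) =
      (-1 : ℝ) ^ k * polyInt (derivative^[n - k] ((X ^ 2 - X : Polynomial ℝ) ^ n) * derivative^[k] s) := by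
  intro k
  induction k with
  | zero => intro _ s; simp
  | succ k ih =>
    intro hk s
    rw [ih (Nat.le_of_succ_le hk) s]
    have harith : n - k = (n - (k + 1)) + 1 := by omega
    have : derivative^[n - k] ((X ^ 2 - X : Polynomial ℝ) ^ n)
        = derivative (derivative^[n - (k + 1)] ((X ^ 2 - X : Polynomial ℝ) ^ n)) := by
      rw [harith, Function.iterate_succ_apply']
    rw [this, ibp _ _ (vanish_eval n _ (by omega) 0 (by ring)) (vanish_eval n _ (by omega) 1 (by ring)),
      Function.iterate_succ_apply']
    ring

lemma orth (n : ℕ) (s : Polynomial ℝ) (hs : s.natDegree < n) :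
    polyInt (derivative^[n] ((X ^ 2 - X : Polynomial ℝ) ^ n) * s) = 0 := by
  rw [orth_aux n n le_rfl s, Polynomial.iterate_derivative_eq_zero hs]
  simp [polyInt]

lemma XX_monic : ((X ^ 2 - X : Polynomial ℝ)).Monic := by
  have : (X ^ 2 - X : Polynomial ℝ) = X ^ 2 + (-X) := by ring
  rw [this]
  apply (monic_X_pow 2).add_of_left
  rw [degree_neg, degree_X, degree_X_pow]
  norm_num

lemma XX_natDegree2 : ((X ^ 2 - X : Polynomial ℝ)).natDegree = 2 := by
  have h : ((X ^ 2 - X : Polynomial ℝ)) = X ^ 2 + (-X) := by ring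
  rw [h]; compute_degree!
  rw [coeff_X]
  norm_num

lemma XX_natDegree (n : ℕ) : ((X ^ 2 - X : Polynomial ℝ) ^ n).natDegree = 2 * n := by
  rw [natDegree_pow, XX_natDegree2]; ring

lemma shLegendre_natDegree_le (n : ℕ) : (shLegendre n).natDegree ≤ n := by
  unfold shLegendre
  refine (natDegree_smul_le _ _).trans ?_
  refine (natDegree_iterate_derivative _ _).trans ?_
  rw [XX_natDegree]; omega

lemma shLegendre_coeff (n : ℕ) : (shLegendre n).coeff n ≠ 0 := by
  unfold shLegendre
  rw [coeff_smul, coeff_iterate_derivative]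
  have h2 : ((X ^ 2 - X : Polynomial ℝ) ^ n).coeff (n + n) = 1 := by
    have : n + n = ((X ^ 2 - X : Polynomial ℝ) ^ n).natDegree := by rw [XX_natDegree]; omega
    rw [this]
    exact Monic.coeff_natDegree (XX_monic.pow _)
  rw [h2]
  simp only [nsmul_eq_mul, mul_one, smul_eq_mul, ne_eq, mul_eq_zero, inv_eq_zero,
    Nat.cast_eq_zero, not_or]
  exact ⟨n.factorial_ne_zero, fun h => by have := Nat.descFactorial_eq_zero_iff_lt.mp h; omega⟩

lemma shLegendre_orth (n : ℕ) (s : Polynomial ℝ) (hs : s.natDegree < n) :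
    polyInt (shLegendre n * s) = 0 := by
  unfold shLegendre
  rw [smul_mul_assoc, polyInt_smul, orth n s hs, mul_zero]

lemma rightRadau_coeff (N : ℕ) : (rightRadau (N + 1)).coeff (N + 1) ≠ 0 := by
  unfold rightRadau
  rw [coeff_smul, coeff_sub]
  have h0 : (shLegendre (N + 1 - 1)).coeff (N + 1) = 0 := by
    apply coeff_eq_zero_of_natDegree_lt
    exact lt_of_le_of_lt (shLegendre_natDegree_le _) (by omega)
  rw [h0, sub_zero, smul_eq_mul]
  exact mul_ne_zero (by positivity) (shLegendre_coeff _)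

lemma rightRadau_ne_zero (N : ℕ) : rightRadau (N + 1) ≠ 0 := fun h => by
  simpa [h] using rightRadau_coeff N

lemma rightRadau_natDegree_le (N : ℕ) : (rightRadau (N + 1)).natDegree ≤ N + 1 := by
  unfold rightRadau
  refine (natDegree_smul_le _ _).trans ((natDegree_sub_le _ _).trans ?_)
  exact max_le (shLegendre_natDegree_le _) ((shLegendre_natDegree_le _).trans (by omega))

lemma rightRadau_orth (N : ℕ) (s : Polynomial ℝ) (hs : s.natDegree < N) :
    polyInt (rightRadau (N + 1) * s) = 0 := by
  unfold rightRadau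
  rw [smul_mul_assoc, polyInt_smul, sub_mul, polyInt_sub,
    shLegendre_orth _ _ (by omega : s.natDegree < N + 1),
    shLegendre_orth _ _ (by simpa using hs)]
  ring

/-- For the Gauss–Radau nodes (roots of `R_{N+1}`) with Lagrange basis `φ_p` and weights
`w_p = ∫₀¹ φ_p`: each weight coincides with the diagonal mass-matrix entry
`∫₀¹ φ_p²` (hence is positive), and the weights sum to `1`. -/
theorem gaussRadau_weights_eq_massDiagonal_and_sum_one (N : ℕ) (τ : Fin (N + 1) → ℝ)
    (hτ : Function.Injective τ)
    (hroot : ∀ i, (rightRadau (N + 1)).eval (τ i) = 0)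
    (φ : Fin (N + 1) → Polynomial ℝ)
    (hdeg : ∀ p, (φ p).degree ≤ (N : WithBot ℕ))
    (hval : ∀ p k, (φ p).eval (τ k) = if p = k then 1 else 0) :
    (∀ p, (∫ t in (0:ℝ)..1, (φ p).eval t) = ∫ t in (0:ℝ)..1, ((φ p).eval t) ^ 2) ∧
    (∀ p, 0 < ∫ t in (0:ℝ)..1, (φ p).eval t) ∧
    ∑ p, (∫ t in (0:ℝ)..1, (φ p).eval t) = 1 := by
  have hφdeg : ∀ p, (φ p).natDegree ≤ N := fun p => natDegree_le_iff_degree_le.mpr (hdeg p)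
  set Q : Polynomial ℝ := ∏ i, (X - C (τ i)) with hQ
  have hQmonic : Q.Monic := monic_prod_of_monic _ _ fun i _ => monic_X_sub_C _
  have hQdeg : Q.natDegree = N + 1 := by
    rw [hQ, natDegree_prod _ _ fun i _ => X_sub_C_ne_zero _]
    simp
  have hdvd : ∀ p : Polynomial ℝ, (∀ i, p.eval (τ i) = 0) → Q ∣ p := fun p hp =>
    Fintype.prod_dvd_of_coprime (pairwise_coprime_X_sub_C hτ)
      fun i => dvd_iff_isRoot.mpr (hp i)
  -- rightRadau (N+1) = Q * C c with c ≠ 0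
  obtain ⟨s₀, hs₀⟩ := hdvd _ hroot
  have hs₀ne : s₀ ≠ 0 := by
    rintro rfl; rw [mul_zero] at hs₀; exact rightRadau_ne_zero N hs₀
  have hs₀deg : s₀.natDegree = 0 := by
    have h := natDegree_mul hQmonic.ne_zero hs₀ne
    rw [← hs₀, hQdeg] at h
    have := rightRadau_natDegree_le N
    omega
  set c := s₀.coeff 0 with hc
  have hs₀C : s₀ = C c := (eq_C_of_natDegree_eq_zero hs₀deg)
  have hcne : c ≠ 0 := fun h => hs₀ne (by rw [hs₀C, h, map_zero])
  -- exactness: any poly of degree ≤ 2N vanishing at all nodes has zero integral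
  have key : ∀ r : Polynomial ℝ, (∀ i, r.eval (τ i) = 0) → r.natDegree ≤ 2 * N →
      polyInt r = 0 := by
    intro r hr hdeg2
    obtain ⟨u, hu⟩ := hdvd r hr
    by_cases hrz : r = 0
    · simp [polyInt, hrz]
    have hune : u ≠ 0 := by rintro rfl; rw [mul_zero] at hu; exact hrz hu
    have hdu : u.natDegree < N := by
      have h := natDegree_mul hQmonic.ne_zero hune
      rw [← hu, hQdeg] at h
      omega
    have hr2 : r = rightRadau (N + 1) * (C c⁻¹ * u) := by
      rw [hs₀, hs₀C, hu]
      rw [mul_assoc, ← mul_assoc (C c), ← C_mul, mul_inv_cancel₀ hcne, C_1, one_mul]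
    rw [hr2]
    exact rightRadau_orth N _ (lt_of_le_of_lt (natDegree_C_mul_le _ _) hdu)
  -- part 1
  have part1 : ∀ p, (∫ t in (0:ℝ)..1, (φ p).eval t) = ∫ t in (0:ℝ)..1, ((φ p).eval t) ^ 2 := by
    intro p
    have hroots : ∀ i, (φ p ^ 2 - φ p).eval (τ i) = 0 := by
      intro i
      rw [eval_sub, eval_pow, hval]
      by_cases h : p = i <;> simp [h]
    have hd : (φ p ^ 2 - φ p).natDegree ≤ 2 * N := by
      refine (natDegree_sub_le _ _).trans (max_le ?_ ((hφdeg p).trans (by omega)))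
      calc (φ p ^ 2).natDegree ≤ 2 * (φ p).natDegree := natDegree_pow_le
        _ ≤ 2 * N := by have := hφdeg p; omega
    have h0 := key _ hroots hd
    rw [polyInt_sub] at h0
    have e1 : polyInt (φ p ^ 2) = ∫ t in (0:ℝ)..1, ((φ p).eval t) ^ 2 := by
      unfold polyInt; simp [eval_pow]
    have e2 : polyInt (φ p) = ∫ t in (0:ℝ)..1, (φ p).eval t := rfl
    rw [e1, e2] at h0
    linarith
  refine ⟨part1, ?_, ?_⟩
  · -- positivity
    intro p
    rw [part1 p]
    have hφne : φ p ≠ 0 := fun h => by simpa [h] using hval p p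
    have hcont : Continuous fun t => ((φ p).eval t) ^ 2 := ((φ p).continuous_aeval).pow 2
    rw [intervalIntegral.integral_pos_iff_support_of_nonneg_ae
      (Filter.Eventually.of_forall fun t => sq_nonneg _)
      (hcont.intervalIntegrable _ _)]
    refine ⟨zero_lt_one, ?_⟩
    have hfin : {x : ℝ | (φ p).IsRoot x}.Finite := Polynomial.finite_setOf_isRoot hφne
    have hsub : Set.Ioc (0:ℝ) 1 \ {x : ℝ | (φ p).IsRoot x} ⊆
        (Function.support fun t => ((φ p).eval t) ^ 2) ∩ Set.Ioc 0 1 := by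
      rintro x ⟨hx1, hx2⟩
      exact ⟨by simpa [Function.mem_support, pow_eq_zero_iff] using hx2, hx1⟩
    refine lt_of_lt_of_le ?_ (MeasureTheory.measure_mono hsub)
    rw [MeasureTheory.measure_diff_null (hfin.measure_zero _)]
    simp
  · -- sum
    have hq : (∑ p, φ p) - 1 = 0 := by
      by_contra hne
      have hdvd1 : Q ∣ (∑ p, φ p) - 1 := by
        refine hdvd _ fun i => ?_
        rw [eval_sub, eval_finset_sum]
        simp [hval, Finset.sum_ite_eq']
      have := natDegree_le_of_dvd hdvd1 hne
      rw [hQdeg] at this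
      have hd : ((∑ p, φ p) - 1).natDegree ≤ N := by
        refine (natDegree_sub_le _ _).trans (max_le ?_ (by simp))
        exact natDegree_sum_le_of_forall_le _ _ fun p _ => hφdeg p
      omega
    have hsum : ∀ t : ℝ, ∑ p, (φ p).eval t = 1 := by
      intro t
      have := congrArg (eval t) hq
      simpa [eval_finset_sum, sub_eq_zero] using this
    rw [← intervalIntegral.integral_finset_sum
      (fun (p : Fin (N+1)) _ => ((φ p).continuous).intervalIntegrable (0:ℝ) 1)]
    simp [hsum]
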